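/- Define τ(q) = √((q² − q + 1 − 2^{q−1})·(2^{q−1} − 1)) / (q(q−1)) for real q ∈ (1,2]. Then q² − q + 1 − 2^{q−1} ≥ 0 for all q ∈ (1,2], and τ is monotonically non-decreasing on (1,2]: for all real q, q' with 1 < q ≤ q' ≤ 2, τ(q) ≤ τ(q'). -/

import Mathlib

/-- `τ(q) = √((q² − q + 1 − 2^{q−1})·(2^{q−1} − 1)) / (q(q−1))` (real powers). -/
noncomputable def tau (q : ℝ) : ℝ :=
  Real.sqrt ((q ^ 2 - q + 1 - (2 : ℝ) ^ (q - 1)) * ((2 : ℝ) ^ (q - 1) - 1)) /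
    (q * (q - 1))

open Real Set

/-- Auxiliary: `E t = 2^t` written via `exp`. -/
noncomputable def tauE (t : ℝ) : ℝ := Real.exp (Real.log 2 * t)

lemma tauE_hasDeriv (t : ℝ) : HasDerivAt tauE (tauE t * Real.log 2) t := by
  have h : HasDerivAt (fun x : ℝ => Real.log 2 * x) (Real.log 2) t := by
    simpa using (hasDerivAt_id t).const_mul (Real.log 2)
  exact h.exp

lemma tauE_zero : tauE 0 = 1 := by simp [tauE]

lemma tauE_one : tauE 1 = 2 := by simp [tauE, Real.exp_log]

lemma log_two_sq_lt : Real.log 2 ^ 2 < 1 / 2 := by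
  have h1 : Real.log 2 < 0.6931471808 := Real.log_two_lt_d9
  have h0 : 0 < Real.log 2 := Real.log_pos one_lt_two
  nlinarith

/-- `2^t ≤ 1 + t` on `[0,1]` by convexity of `exp`. -/
lemma tauE_le_one_add {t : ℝ} (h0 : 0 ≤ t) (h1 : t ≤ 1) : tauE t ≤ 1 + t := by
  have := convexOn_exp.2 (mem_univ (0 : ℝ)) (mem_univ (Real.log 2))
    (by linarith : (0:ℝ) ≤ 1 - t) h0 (by ring)
  simp only [smul_eq_mul, mul_zero, zero_add, Real.exp_zero, Real.exp_log two_pos] at this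
  calc tauE t = Real.exp (t * Real.log 2) := by rw [tauE, mul_comm]
    _ ≤ (1 - t) * 1 + t * 2 := this
    _ = 1 + t := by ring

/-- `ψ t = (t²+t)·2^t·log 2 − (2^t − 1)(2t+1)`, the numerator of `φ'`. -/
noncomputable def tauPsi (t : ℝ) : ℝ :=
  (t ^ 2 + t) * tauE t * Real.log 2 - (tauE t - 1) * (2 * t + 1)

noncomputable def tauPsi1 (t : ℝ) : ℝ :=
  tauE t * (Real.log 2 ^ 2 * t ^ 2 + Real.log 2 ^ 2 * t - 2) + 2

noncomputable def tauPsi2 (t : ℝ) : ℝ :=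
  tauE t * (Real.log 2 ^ 3 * t ^ 2 + (Real.log 2 ^ 3 + 2 * Real.log 2 ^ 2) * t
    + Real.log 2 ^ 2 - 2 * Real.log 2)

noncomputable def tauPsi3 (t : ℝ) : ℝ :=
  tauE t * (Real.log 2 ^ 4 * t ^ 2 + (Real.log 2 ^ 4 + 4 * Real.log 2 ^ 3) * t
    + 2 * Real.log 2 ^ 3)

lemma tauPsi_hasDeriv (t : ℝ) : HasDerivAt tauPsi (tauPsi1 t) t := by
  have h1 : HasDerivAt (fun t : ℝ => (t ^ 2 + t) * tauE t * Real.log 2)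
      (((2 * t + 1) * tauE t + (t ^ 2 + t) * (tauE t * Real.log 2)) * Real.log 2) t := by
    have := (((hasDerivAt_pow 2 t).add (hasDerivAt_id t)).mul (tauE_hasDeriv t)).mul_const
      (Real.log 2)
    refine this.congr_deriv ?_
    simp only [Pi.add_apply, id_eq]; ring
  have h2 : HasDerivAt (fun t : ℝ => (tauE t - 1) * (2 * t + 1))
      ((tauE t * Real.log 2) * (2 * t + 1) + (tauE t - 1) * 2) t := by
    have := ((tauE_hasDeriv t).sub_const 1).mul
      (((hasDerivAt_id t).const_mul 2).add_const 1)
    simp at this; exact this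
  have := h1.sub h2
  refine this.congr_deriv ?_
  simp only [tauPsi1, id_eq]; ring

lemma tauPsi1_hasDeriv (t : ℝ) : HasDerivAt tauPsi1 (tauPsi2 t) t := by
  have hq : HasDerivAt (fun t : ℝ => Real.log 2 ^ 2 * t ^ 2 + Real.log 2 ^ 2 * t - 2)
      (Real.log 2 ^ 2 * (2 * t) + Real.log 2 ^ 2) t := by
    have := (((hasDerivAt_pow 2 t).const_mul (Real.log 2 ^ 2)).add
      ((hasDerivAt_id t).const_mul (Real.log 2 ^ 2))).sub_const 2
    refine this.congr_deriv ?_; ring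
  have := ((tauE_hasDeriv t).mul hq).add_const 2
  refine this.congr_deriv ?_
  simp only [tauPsi2, id_eq]; ring

lemma tauPsi2_hasDeriv (t : ℝ) : HasDerivAt tauPsi2 (tauPsi3 t) t := by
  have hq : HasDerivAt (fun t : ℝ => Real.log 2 ^ 3 * t ^ 2
      + (Real.log 2 ^ 3 + 2 * Real.log 2 ^ 2) * t + Real.log 2 ^ 2 - 2 * Real.log 2)
      (Real.log 2 ^ 3 * (2 * t) + (Real.log 2 ^ 3 + 2 * Real.log 2 ^ 2)) t := by
    have := ((((hasDerivAt_pow 2 t).const_mul (Real.log 2 ^ 3)).add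
      ((hasDerivAt_id t).const_mul (Real.log 2 ^ 3 + 2 * Real.log 2 ^ 2))).add_const
        (Real.log 2 ^ 2)).sub_const (2 * Real.log 2)
    refine this.congr_deriv ?_; ring
  have := (tauE_hasDeriv t).mul hq
  refine this.congr_deriv ?_
  simp only [tauPsi3, id_eq]; ring

lemma tauPsi1_nonpos : ∀ t ∈ Icc (0:ℝ) 1, tauPsi1 t ≤ 0 := by
  have hconv : ConvexOn ℝ (Icc (0:ℝ) 1) tauPsi1 := by
    refine convexOn_of_hasDerivWithinAt2_nonneg (convex_Icc 0 1)
      (fun x _ => (tauPsi1_hasDeriv x).continuousAt.continuousWithinAt)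
      (fun x _ => (tauPsi1_hasDeriv x).hasDerivWithinAt)
      (fun x _ => (tauPsi2_hasDeriv x).hasDerivWithinAt) ?_
    intro x hx
    rw [interior_Icc] at hx
    have hE : 0 < tauE x := Real.exp_pos _
    have hc : 0 < Real.log 2 := Real.log_pos one_lt_two
    have hx0 := hx.1
    simp only [tauPsi3]
    have hinner : 0 ≤ Real.log 2 ^ 4 * x ^ 2 + (Real.log 2 ^ 4 + 4 * Real.log 2 ^ 3) * x
        + 2 * Real.log 2 ^ 3 := by nlinarith [pow_pos hc 3, pow_pos hc 4, sq_nonneg x]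
    exact mul_nonneg hE.le hinner
  intro t ht
  have key := hconv.2 (left_mem_Icc.2 zero_le_one) (right_mem_Icc.2 zero_le_one)
    (by linarith [ht.2] : (0:ℝ) ≤ 1 - t) ht.1 (by ring)
  simp only [smul_eq_mul, mul_zero, mul_one, zero_add] at key
  have h0 : tauPsi1 0 = 0 := by simp [tauPsi1, tauE_zero]
  have h1 : tauPsi1 1 = 4 * Real.log 2 ^ 2 - 2 := by
    simp only [tauPsi1, tauE_one]; ring
  have hsq := log_two_sq_lt
  have ht1 := ht.1
  calc tauPsi1 t ≤ (1 - t) * tauPsi1 0 + t * tauPsi1 1 := key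
    _ ≤ 0 := by rw [h0, h1]; nlinarith

lemma tauPsi_nonpos : ∀ t ∈ Icc (0:ℝ) 1, tauPsi t ≤ 0 := by
  have hanti : AntitoneOn tauPsi (Icc (0:ℝ) 1) := by
    refine antitoneOn_of_hasDerivWithinAt_nonpos (convex_Icc 0 1)
      (fun x _ => (tauPsi_hasDeriv x).continuousAt.continuousWithinAt)
      (fun x hx => (tauPsi_hasDeriv x).hasDerivWithinAt) ?_
    intro x hx
    rw [interior_Icc] at hx
    exact tauPsi1_nonpos x ⟨hx.1.le, hx.2.le⟩
  intro t ht
  have h0 : tauPsi 0 = 0 := by simp [tauPsi, tauE_zero]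
  calc tauPsi t ≤ tauPsi 0 := hanti (left_mem_Icc.2 zero_le_one) ht ht.1
    _ = 0 := h0

/-- `φ t = (2^t − 1)/(t²+t)`. -/
noncomputable def tauPhi (t : ℝ) : ℝ := (tauE t - 1) / (t ^ 2 + t)

lemma denom_pos {t : ℝ} (ht : 0 < t) : 0 < t ^ 2 + t := by positivity

lemma tauPhi_anti : AntitoneOn tauPhi (Ioc (0:ℝ) 1) := by
  refine antitoneOn_of_hasDerivWithinAt_nonpos (convex_Ioc 0 1)
    ?_ (f' := fun t => tauPsi t / (t ^ 2 + t) ^ 2) ?_ ?_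
  · refine ContinuousOn.div ?_ ?_ ?_
    · exact (Real.continuous_exp.comp (continuous_const.mul continuous_id)).continuousOn.sub
        continuousOn_const
    · fun_prop
    · exact fun x hx => (denom_pos hx.1).ne'
  · intro x hx
    rw [interior_Ioc] at hx
    have hd : HasDerivAt tauPhi (tauPsi x / (x ^ 2 + x) ^ 2) x := by
      have hden : HasDerivAt (fun t : ℝ => t ^ 2 + t) (2 * x + 1) x := by
        have := (hasDerivAt_pow 2 x).add (hasDerivAt_id x)
        refine this.congr_deriv ?_; ring
      have := ((tauE_hasDeriv x).sub_const 1).div hden (denom_pos hx.1).ne'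
      refine this.congr_deriv ?_
      simp only [tauPsi, id_eq]; ring
    exact hd.hasDerivWithinAt
  · intro x hx
    rw [interior_Ioc] at hx
    have hψ : tauPsi x ≤ 0 := tauPsi_nonpos x ⟨hx.1.le, hx.2.le⟩
    exact div_nonpos_of_nonpos_of_nonneg hψ (sq_nonneg _)

/-- `h t = 2·2^t − t² − t − 2 ≥ 0` on `[0,1]` by concavity. -/
lemma tauH_nonneg : ∀ t ∈ Icc (0:ℝ) 1, 0 ≤ 2 * tauE t - t ^ 2 - t - 2 := by
  set h : ℝ → ℝ := fun t => 2 * tauE t - t ^ 2 - t - 2 with hh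
  have hd1 : ∀ x : ℝ, HasDerivAt h (2 * (tauE x * Real.log 2) - (2 * x + 1)) x := by
    intro x
    have := ((((tauE_hasDeriv x).const_mul 2).sub (hasDerivAt_pow 2 x)).sub
      (hasDerivAt_id x)).sub_const 2
    refine this.congr_deriv ?_
    push_cast
    try simp only [id_eq]
    ring
  have hd2 : ∀ x : ℝ, HasDerivAt (fun t => 2 * (tauE t * Real.log 2) - (2 * t + 1))
      (2 * (tauE x * Real.log 2 * Real.log 2) - 2) x := by
    intro x
    have := (((tauE_hasDeriv x).mul_const (Real.log 2)).const_mul 2).sub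
      (((hasDerivAt_id x).const_mul 2).add_const 1)
    refine this.congr_deriv ?_
    ring
  have hconc : ConcaveOn ℝ (Icc (0:ℝ) 1) h := by
    refine concaveOn_of_hasDerivWithinAt2_nonpos (convex_Icc 0 1)
      (fun x _ => (hd1 x).continuousAt.continuousWithinAt)
      (fun x _ => (hd1 x).hasDerivWithinAt)
      (fun x _ => (hd2 x).hasDerivWithinAt) ?_
    intro x hx
    rw [interior_Icc] at hx
    have hc : 0 < Real.log 2 := Real.log_pos one_lt_two
    have hEle : tauE x ≤ 2 := by
      have hle : Real.log 2 * x ≤ Real.log 2 * 1 := by nlinarith [hx.2]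
      calc tauE x ≤ tauE 1 := Real.exp_le_exp.2 hle
        _ = 2 := tauE_one
    have hsq := log_two_sq_lt
    have hE0 : 0 < tauE x := Real.exp_pos _
    nlinarith
  intro t ht
  have key := hconc.2 (left_mem_Icc.2 zero_le_one) (right_mem_Icc.2 zero_le_one)
    (by linarith [ht.2] : (0:ℝ) ≤ 1 - t) ht.1 (by ring)
  simp only [smul_eq_mul, mul_zero, mul_one, zero_add] at key
  have h0 : h 0 = 0 := by rw [hh]; norm_num [tauE_zero]
  have h1 : h 1 = 0 := by rw [hh]; norm_num [tauE_one]
  rw [h0, h1] at key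
  have hht : 0 ≤ h t := by linarith [key]
  exact hht

lemma tauPhi_mem {t : ℝ} (ht : t ∈ Ioc (0:ℝ) 1) : tauPhi t ∈ Icc (1/2 : ℝ) 1 := by
  have hd := denom_pos ht.1
  unfold tauPhi
  constructor
  · rw [le_div_iff₀ hd]
    have := tauH_nonneg t ⟨ht.1.le, ht.2⟩
    linarith
  · rw [div_le_one hd]
    have := tauE_le_one_add ht.1.le ht.2
    nlinarith [ht.1]

/-- Rewriting `tau` in terms of `tauPhi`. -/
lemma tau_eq {q : ℝ} (h1 : 1 < q) (h2 : q ≤ 2) :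
    tau q = Real.sqrt (tauPhi (q - 1) * (1 - tauPhi (q - 1))) := by
  set t := q - 1 with htdef
  have ht : t ∈ Ioc (0:ℝ) 1 := ⟨by simp [htdef]; linarith, by simp [htdef]; linarith⟩
  have hs : (0:ℝ) < t ^ 2 + t := denom_pos ht.1
  set s := t ^ 2 + t with hsdef
  set x := tauPhi t with hxdef
  have hsx : s * x = tauE t - 1 := by
    rw [hxdef]; unfold tauPhi
    rw [← hsdef]
    field_simp
  have hpow : (2:ℝ) ^ (q - 1) = tauE t := by
    rw [Real.rpow_def_of_pos two_pos]; rfl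
  have hq1 : q ^ 2 - q + 1 - (2:ℝ) ^ (q - 1) = s * (1 - x) := by
    rw [hpow]; rw [mul_one_sub, hsx, hsdef, htdef]; ring
  have hq2 : (2:ℝ) ^ (q - 1) - 1 = s * x := by rw [hpow, hsx]
  have hq3 : q * (q - 1) = s := by rw [hsdef, htdef]; ring
  rw [tau, hq1, hq2, hq3]
  have : s * (1 - x) * (s * x) = s ^ 2 * (x * (1 - x)) := by ring
  rw [this, Real.sqrt_mul (sq_nonneg s), Real.sqrt_sq hs.le,
    mul_div_cancel_left₀ _ hs.ne']

theorem tau_monotone :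
    (∀ q : ℝ, 1 < q → q ≤ 2 → 0 ≤ q ^ 2 - q + 1 - (2 : ℝ) ^ (q - 1)) ∧
    (∀ q q' : ℝ, 1 < q → q ≤ q' → q' ≤ 2 → tau q ≤ tau q') := by
  constructor
  · intro q hq1 hq2
    have hpow : (2:ℝ) ^ (q - 1) = tauE (q - 1) := Real.rpow_def_of_pos two_pos _
    have := tauE_le_one_add (by linarith : (0:ℝ) ≤ q - 1) (by linarith : q - 1 ≤ 1)
    rw [hpow]
    nlinarith [sq_nonneg (q - 1)]
  · intro q q' hq1 hqq hq2
    have hq'1 : 1 < q' := lt_of_lt_of_le hq1 hqq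
    have hqle2 : q ≤ 2 := le_trans hqq hq2
    have htmem : q - 1 ∈ Ioc (0:ℝ) 1 := ⟨by linarith, by linarith⟩
    have ht'mem : q' - 1 ∈ Ioc (0:ℝ) 1 := ⟨by linarith, by linarith⟩
    have hanti : tauPhi (q' - 1) ≤ tauPhi (q - 1) :=
      tauPhi_anti htmem ht'mem (by linarith)
    obtain ⟨hx1, hx2⟩ := tauPhi_mem htmem
    obtain ⟨hx'1, hx'2⟩ := tauPhi_mem ht'mem
    rw [tau_eq hq1 hqle2, tau_eq hq'1 hq2]
    apply Real.sqrt_le_sqrt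
    nlinarith
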